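/- arXiv:math/0105012 — 2 statements merged into one kernel-verified Lean document; each statement's English description precedes it below -/
import Mathlib

section
/- Let λ ∈ ℕ. Then the generalized binomial coefficient C(λ,i) = λ(λ-1)···(λ-i+1)/i! is nonzero for 0 ≤ i ≤ λ and zero for i > λ. Consequently the kernel of the map φ_λ : M(λ) → DM(λ), φ_λ(v_i) = C(λ,i)v_i*, is the span of {v_i : i > λ}, which is the submodule of M(λ) generated by v_{λ+1} and is isomorphic to the Verma module M(-λ-2). -/
/-!
For `λ = n ∈ ℕ` the product defining `C(n,i)` contains the factor `n - n` exactly when `i > n`,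
so the diagonal map `φ_n` has kernel spanned by the `v_i` with `i > n`. This span is stable
under `e, f, h` (`e` kills `v_{n+1}` because its coefficient `n + 1 - (n + 1)` vanishes) and is
generated by `v_{n+1}`, since `f` moves `v_i` to a nonzero multiple of `v_{i+1}`. Sending
`f^i v_0 / i! = v_i` to `f^i v_{n+1} / i! = C(n+1+i, i) v_{n+1+i}` embeds `M(-n-2)` onto it:
`v_{n+1}` has weight `n - 2(n+1) = -n-2` and is killed by `e`.
-/

/-- f·v_i = (i+1) v_{i+1} on the Verma module M(λ) with basis v_i = single i 1. -/
noncomputable def Fop : (ℕ →₀ ℂ) →ₗ[ℂ] (ℕ →₀ ℂ) :=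
  Finsupp.lsum ℂ fun i => ((i : ℂ) + 1) • Finsupp.lsingle (i + 1)

/-- e·v_i = (λ+1-i) v_{i-1} (with v_{-1} = 0). -/
noncomputable def Eop (lam : ℂ) : (ℕ →₀ ℂ) →ₗ[ℂ] (ℕ →₀ ℂ) :=
  Finsupp.lsum ℂ fun i => if i = 0 then 0 else (lam + 1 - i) • Finsupp.lsingle (i - 1)

/-- h·v_i = (λ-2i) v_i. -/
noncomputable def Hop (lam : ℂ) : (ℕ →₀ ℂ) →ₗ[ℂ] (ℕ →₀ ℂ) :=
  Finsupp.lsum ℂ fun i => (lam - 2 * i) • Finsupp.lsingle i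

/-- On the dual DM(λ): e·v_i* = i v_{i-1}*. -/
noncomputable def Ed : (ℕ →₀ ℂ) →ₗ[ℂ] (ℕ →₀ ℂ) :=
  Finsupp.lsum ℂ fun i => (i : ℂ) • Finsupp.lsingle (i - 1)

/-- On the dual DM(λ): f·v_i* = (λ-i) v_{i+1}*. -/
noncomputable def Fd (lam : ℂ) : (ℕ →₀ ℂ) →ₗ[ℂ] (ℕ →₀ ℂ) :=
  Finsupp.lsum ℂ fun i => (lam - i) • Finsupp.lsingle (i + 1)

/-- Generalized binomial coefficient C(λ,i) = λ(λ-1)⋯(λ-i+1)/i!. -/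
noncomputable def gbinom (lam : ℂ) (i : ℕ) : ℂ :=
  (∏ j ∈ Finset.range i, (lam - j)) / (Nat.factorial i : ℂ)

/-- φ_λ(v_i) = C(λ,i) v_i*. -/
noncomputable def phiMap (lam : ℂ) : (ℕ →₀ ℂ) →ₗ[ℂ] (ℕ →₀ ℂ) :=
  Finsupp.lsum ℂ fun i => gbinom lam i • Finsupp.lsingle i

/-- ψ_λ(v_i*) = 0 for i ≤ λ, (-1)^i C(i,i-λ-1) v_i for i > λ. -/
noncomputable def psiMap (n : ℕ) : (ℕ →₀ ℂ) →ₗ[ℂ] (ℕ →₀ ℂ) :=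
  Finsupp.lsum ℂ fun i =>
    (if i ≤ n then (0 : ℂ) else (-1) ^ i * (Nat.choose i (i - n - 1) : ℂ)) • Finsupp.lsingle i

open Finsupp

section WeightedReindexing

variable {R α β : Type*}

theorem lsum_smul_lsingle_apply_of_injective [CommSemiring R] (a : α → R) {σ : α → β}
    (hσ : σ.Injective) (x : α →₀ R) (k : α) :
    lsum R (fun i => a i • (lsingle (σ i) : R →ₗ[R] β →₀ R)) x (σ k) = a k * x k := by
  induction x using Finsupp.induction_linear with
  | zero => simp
  | add x y hx hy => rw [map_add, Finsupp.add_apply, hx, hy, Finsupp.add_apply, mul_add]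
  | single i c =>
    by_cases h : i = k
    · subst h; simp
    · simp [hσ.ne h, h]

theorem lsum_smul_lsingle_apply [CommSemiring R] (a : α → R) (x : α →₀ R) (k : α) :
    lsum R (fun i => a i • (lsingle i : R →ₗ[R] α →₀ R)) x k = a k * x k :=
  lsum_smul_lsingle_apply_of_injective a Function.injective_id x k

theorem ker_lsum_smul_lsingle [CommSemiring R] [NoZeroDivisors R] (a : α → R) :
    LinearMap.ker (lsum R fun i => a i • (lsingle i : R →ₗ[R] α →₀ R)) =
      supported R R {i | a i = 0} := by
  ext x
  rw [LinearMap.mem_ker, mem_supported', Finsupp.ext_iff]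
  refine forall_congr' fun i => ?_
  rw [lsum_smul_lsingle_apply, coe_zero,
    Pi.zero_apply, mul_eq_zero, Set.mem_ofPred_eq]
  tauto

theorem supported_le_comap_of_single_mem [Semiring R] {s : Set α}
    (f : (α →₀ R) →ₗ[R] (α →₀ R)) (h : ∀ i ∈ s, f (single i 1) ∈ supported R R s) :
    supported R R s ≤ (supported R R s).comap f := by
  conv_lhs => rw [supported_eq_span_single]
  rw [Submodule.span_le]
  rintro _ ⟨i, hi, rfl⟩
  exact h i hi

end WeightedReindexing

theorem supported_Ioi_eq_span_single {R α : Type*} [Semiring R] [Preorder α] (n : α) :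
    supported R R (Set.Ioi n) = Submodule.span R {x : α →₀ R | ∃ i > n, x = single i 1} := by
  rw [supported_eq_span_single]
  congr 1
  ext x
  simp [eq_comm]

section Verma

theorem Fop_single (i : ℕ) (c : ℂ) : Fop (single i c) = ((i : ℂ) + 1) • single (i + 1) c := by
  rw [Fop, lsum_single, LinearMap.smul_apply, lsingle_apply]

theorem Hop_single (lam : ℂ) (i : ℕ) (c : ℂ) :
    Hop lam (single i c) = (lam - 2 * i) • single i c := by
  rw [Hop, lsum_single, LinearMap.smul_apply, lsingle_apply]

theorem Eop_single_zero (lam c : ℂ) : Eop lam (single 0 c) = 0 := by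
  rw [Eop, lsum_single, if_pos rfl, LinearMap.zero_apply]

theorem Eop_single_succ (lam : ℂ) (k : ℕ) (c : ℂ) :
    Eop lam (single (k + 1) c) = (lam - k) • single k c := by
  rw [Eop, lsum_single, if_neg k.succ_ne_zero, LinearMap.smul_apply, lsingle_apply,
    Nat.add_sub_cancel, Nat.cast_succ, add_sub_add_right_eq_sub]

theorem gbinom_natCast_eq_zero_iff (n i : ℕ) : gbinom n i = 0 ↔ n < i := by
  rw [gbinom, div_eq_zero_iff, or_iff_left (Nat.cast_ne_zero.mpr i.factorial_ne_zero),
    Finset.prod_eq_zero_iff]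
  simp [sub_eq_zero]

theorem ker_phiMap_natCast (n : ℕ) :
    LinearMap.ker (phiMap n) = supported ℂ ℂ (Set.Ioi n) := by
  rw [phiMap, ker_lsum_smul_lsingle]
  congr 1
  ext i
  exact gbinom_natCast_eq_zero_iff n i

variable (n : ℕ)

theorem supported_Ioi_le_comap_Eop :
    supported ℂ ℂ (Set.Ioi n) ≤ (supported ℂ ℂ (Set.Ioi n)).comap (Eop n) := by
  refine supported_le_comap_of_single_mem _ fun i hi => ?_
  obtain ⟨k, rfl⟩ : ∃ k, i = k + 1 := ⟨i - 1, by simp at hi; omega⟩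
  rw [Eop_single_succ]
  rcases (Nat.lt_succ_iff.mp hi).eq_or_lt with rfl | hk
  · simp
  · exact Submodule.smul_mem _ _ (single_mem_supported ℂ 1 hk)

theorem supported_Ioi_le_comap_Fop :
    supported ℂ ℂ (Set.Ioi n) ≤ (supported ℂ ℂ (Set.Ioi n)).comap Fop :=
  supported_le_comap_of_single_mem _ fun i hi => by
    rw [Fop_single]
    exact Submodule.smul_mem _ _ (single_mem_supported ℂ 1 (Nat.lt_succ_of_lt hi))

theorem supported_Ioi_le_comap_Hop :
    supported ℂ ℂ (Set.Ioi n) ≤ (supported ℂ ℂ (Set.Ioi n)).comap (Hop n) :=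
  supported_le_comap_of_single_mem _ fun i hi => by
    rw [Hop_single]
    exact Submodule.smul_mem _ _ (single_mem_supported ℂ 1 hi)

theorem supported_Ioi_le_of_Fop_stable (p : Submodule ℂ (ℕ →₀ ℂ))
    (hp : single (n + 1) 1 ∈ p) (hF : ∀ x ∈ p, Fop x ∈ p) :
    supported ℂ ℂ (Set.Ioi n) ≤ p := by
  have hmem : ∀ m, single (n + 1 + m) (1 : ℂ) ∈ p := by
    intro m
    induction m with
    | zero => exact hp
    | succ m ih =>
      have h := hF _ ih
      rw [Fop_single] at h
      exact (Submodule.smul_mem_iff p (by norm_cast)).mp h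
  rw [supported_eq_span_single, Submodule.span_le]
  rintro _ ⟨i, hi, rfl⟩
  obtain ⟨m, rfl⟩ : ∃ m, i = n + 1 + m := ⟨i - (n + 1), by simp at hi; omega⟩
  exact hmem m

noncomputable def vermaCoeff (i : ℕ) : ℂ := ((n + 1 + i).choose i : ℂ)

theorem vermaCoeff_ne_zero (i : ℕ) : vermaCoeff n i ≠ 0 :=
  Nat.cast_ne_zero.mpr (Nat.choose_pos (by omega)).ne'

theorem succ_mul_vermaCoeff_succ (i : ℕ) :
    ((i : ℂ) + 1) * vermaCoeff n (i + 1) = vermaCoeff n i * (n + i + 2) := by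
  have h : ((n + 1 + i + 1 : ℕ) : ℂ) * ((n + 1 + i).choose i : ℂ) =
      ((n + 1 + i + 1).choose (i + 1) : ℂ) * ((i + 1 : ℕ) : ℂ) := by
    exact_mod_cast Nat.add_one_mul_choose_eq (n + 1 + i) i
  rw [vermaCoeff, vermaCoeff, ← add_assoc]
  push_cast at h
  linear_combination -h

noncomputable def vermaEmbedding : (ℕ →₀ ℂ) →ₗ[ℂ] (ℕ →₀ ℂ) :=
  lsum ℂ fun i => vermaCoeff n i • (lsingle (n + 1 + i) : ℂ →ₗ[ℂ] ℕ →₀ ℂ)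

theorem vermaEmbedding_single (i : ℕ) (c : ℂ) :
    vermaEmbedding n (single i c) = vermaCoeff n i • single (n + 1 + i) c := by
  rw [vermaEmbedding, lsum_single, LinearMap.smul_apply, lsingle_apply]

theorem vermaEmbedding_apply (x : ℕ →₀ ℂ) (k : ℕ) :
    vermaEmbedding n x (n + 1 + k) = vermaCoeff n k * x k :=
  lsum_smul_lsingle_apply_of_injective _ (add_right_injective (n + 1)) x k

theorem vermaEmbedding_injective : Function.Injective (vermaEmbedding n) := by
  refine (injective_iff_map_eq_zero _).mpr fun x hx => Finsupp.ext fun k => ?_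
  have h := vermaEmbedding_apply n x k
  rw [hx, coe_zero, Pi.zero_apply, eq_comm, mul_eq_zero] at h
  exact h.resolve_left (vermaCoeff_ne_zero n k)

theorem range_vermaEmbedding :
    LinearMap.range (vermaEmbedding n) = supported ℂ ℂ (Set.Ioi n) := by
  apply le_antisymm
  · rintro _ ⟨x, rfl⟩
    induction x using Finsupp.induction_linear with
    | zero => simp
    | add x y hx hy => simpa using Submodule.add_mem _ hx hy
    | single i c =>
      rw [vermaEmbedding_single]
      exact Submodule.smul_mem _ _ (single_mem_supported ℂ c (by simp; omega))
  · rw [supported_eq_span_single, Submodule.span_le]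
    rintro _ ⟨i, hi, rfl⟩
    obtain ⟨m, rfl⟩ : ∃ m, i = n + 1 + m := ⟨i - (n + 1), by simp at hi; omega⟩
    refine ⟨(vermaCoeff n m)⁻¹ • single m 1, ?_⟩
    rw [map_smul, vermaEmbedding_single, smul_smul, inv_mul_cancel₀ (vermaCoeff_ne_zero n m),
      one_smul]

theorem vermaEmbedding_comp_Eop :
    vermaEmbedding n ∘ₗ Eop (-(n : ℂ) - 2) = Eop n ∘ₗ vermaEmbedding n := by
  refine lhom_ext fun i c => ?_
  simp only [LinearMap.comp_apply]
  cases i with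
  | zero =>
    rw [Eop_single_zero, map_zero, vermaEmbedding_single, map_smul, add_zero, Eop_single_succ,
      sub_self, zero_smul, smul_zero]
  | succ k =>
    rw [Eop_single_succ, map_smul, vermaEmbedding_single, vermaEmbedding_single, map_smul,
      ← add_assoc, Eop_single_succ, smul_smul, smul_smul]
    congr 1
    push_cast
    linear_combination succ_mul_vermaCoeff_succ n k

theorem vermaEmbedding_comp_Fop : vermaEmbedding n ∘ₗ Fop = Fop ∘ₗ vermaEmbedding n := by
  refine lhom_ext fun i c => ?_
  simp only [LinearMap.comp_apply]
  rw [Fop_single, map_smul, vermaEmbedding_single, vermaEmbedding_single, map_smul, Fop_single,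
    ← add_assoc, smul_smul, smul_smul]
  congr 1
  push_cast
  linear_combination succ_mul_vermaCoeff_succ n i

theorem vermaEmbedding_comp_Hop :
    vermaEmbedding n ∘ₗ Hop (-(n : ℂ) - 2) = Hop n ∘ₗ vermaEmbedding n := by
  refine lhom_ext fun i c => ?_
  simp only [LinearMap.comp_apply]
  rw [Hop_single, map_smul, vermaEmbedding_single, map_smul, Hop_single, smul_smul, smul_smul]
  congr 1
  push_cast
  ring

end Verma

/-- For λ = n ∈ ℕ: C(n,i) ≠ 0 for i ≤ n and C(n,i) = 0 for i > n; the kernel of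
φ_n : M(n) → DM(n) is the span of the v_i with i > n, it is the submodule of M(n)
generated by v_{n+1} (the smallest sl₂-invariant subspace containing v_{n+1}),
and it is isomorphic, as an sl₂-module, to the Verma module M(-n-2). -/
theorem ker_phi_of_nat (n : ℕ) :
    (∀ i ≤ n, gbinom (n : ℂ) i ≠ 0) ∧
    (∀ i > n, gbinom (n : ℂ) i = 0) ∧
    LinearMap.ker (phiMap (n : ℂ)) =
      Submodule.span ℂ {x : ℕ →₀ ℂ | ∃ i > n, x = Finsupp.single i 1} ∧
    (Finsupp.single (n + 1) (1 : ℂ) ∈ LinearMap.ker (phiMap (n : ℂ)) ∧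
      (∀ x ∈ LinearMap.ker (phiMap (n : ℂ)),
        Eop (n : ℂ) x ∈ LinearMap.ker (phiMap (n : ℂ)) ∧
        Fop x ∈ LinearMap.ker (phiMap (n : ℂ)) ∧
        Hop (n : ℂ) x ∈ LinearMap.ker (phiMap (n : ℂ))) ∧
      (∀ p : Submodule ℂ (ℕ →₀ ℂ), Finsupp.single (n + 1) (1 : ℂ) ∈ p →
        (∀ x ∈ p, Eop (n : ℂ) x ∈ p ∧ Fop x ∈ p ∧ Hop (n : ℂ) x ∈ p) →
        LinearMap.ker (phiMap (n : ℂ)) ≤ p)) ∧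
    (∃ T : (ℕ →₀ ℂ) →ₗ[ℂ] (ℕ →₀ ℂ), Function.Injective T ∧
      LinearMap.range T = LinearMap.ker (phiMap (n : ℂ)) ∧
      T ∘ₗ Eop (-(n : ℂ) - 2) = Eop (n : ℂ) ∘ₗ T ∧
      T ∘ₗ Fop = Fop ∘ₗ T ∧
      T ∘ₗ Hop (-(n : ℂ) - 2) = Hop (n : ℂ) ∘ₗ T) := by
  simp only [ker_phiMap_natCast]
  refine ⟨fun i hi => (gbinom_natCast_eq_zero_iff n i).not.mpr (by omega),
    fun i hi => (gbinom_natCast_eq_zero_iff n i).mpr hi, supported_Ioi_eq_span_single n,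
    ⟨single_mem_supported ℂ 1 n.lt_succ_self,
      fun x hx => ⟨supported_Ioi_le_comap_Eop n hx, supported_Ioi_le_comap_Fop n hx,
        supported_Ioi_le_comap_Hop n hx⟩,
      fun p hp hstable => supported_Ioi_le_of_Fop_stable n p hp fun x hx => (hstable x hx).2.1⟩,
    vermaEmbedding n, vermaEmbedding_injective n, range_vermaEmbedding n,
    vermaEmbedding_comp_Eop n, vermaEmbedding_comp_Fop n, vermaEmbedding_comp_Hop n⟩
end

section
/- Let λ ∈ ℕ. There is a four-term exact sequence of sl_2-modules 0 → M(-λ-2) → M(λ) → DM(λ) → DM(-λ-2) → 0, where the middle map is φ_λ(v_i) = C(λ,i)v_i*; moreover DM(-λ-2) ≅ M(-λ-2) (both are simple). -/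
noncomputable def diagMap (g : ℕ → ℂ) : (ℕ →₀ ℂ) →ₗ[ℂ] (ℕ →₀ ℂ) :=
  Finsupp.lsum ℂ fun i => g i • Finsupp.lsingle i

lemma diagMap_single (g : ℕ → ℂ) (i : ℕ) (a : ℂ) :
    diagMap g (Finsupp.single i a) = Finsupp.single i (g i * a) := by
  simp [diagMap, Finsupp.lsum_single, Finsupp.smul_single]

lemma diagMap_apply (g : ℕ → ℂ) (x : ℕ →₀ ℂ) (j : ℕ) :
    diagMap g x j = g j * x j := by
  induction x using Finsupp.induction_linear with
  | zero => simp
  | add u v hu hv => simp [hu, hv, mul_add]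
  | single i a =>
    rw [diagMap_single]
    rcases eq_or_ne i j with rfl | h
    · simp
    · simp [Finsupp.single_apply, h]

noncomputable def Lgen (c : ℕ → ℂ) : (ℕ →₀ ℂ) →ₗ[ℂ] (ℕ →₀ ℂ) :=
  Finsupp.lsum ℂ fun i => c i • Finsupp.lsingle (i - 1)

noncomputable def Rgen (d : ℕ → ℂ) : (ℕ →₀ ℂ) →ₗ[ℂ] (ℕ →₀ ℂ) :=
  Finsupp.lsum ℂ fun i => d i • Finsupp.lsingle (i + 1)

lemma Lgen_single (c : ℕ → ℂ) (i : ℕ) (a : ℂ) :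
    Lgen c (Finsupp.single i a) = Finsupp.single (i - 1) (c i * a) := by
  simp [Lgen, Finsupp.lsum_single, Finsupp.smul_single]

lemma Rgen_single (d : ℕ → ℂ) (i : ℕ) (a : ℂ) :
    Rgen d (Finsupp.single i a) = Finsupp.single (i + 1) (d i * a) := by
  simp [Rgen, Finsupp.lsum_single, Finsupp.smul_single]

lemma Lgen_apply_of_le (c : ℕ → ℂ) (hc0 : c 0 = 0) (x : ℕ →₀ ℂ) (k : ℕ)
    (hx : ∀ i ∈ x.support, i ≤ k) (j : ℕ) (hj : k ≤ j) : Lgen c x j = 0 := by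
  rw [Lgen, Finsupp.lsum_apply, Finsupp.sum_apply]
  apply Finset.sum_eq_zero
  intro i hi
  have hik := hx i hi
  rcases Nat.eq_zero_or_pos i with rfl | hpos
  · simp [hc0]
  · have : i - 1 ≠ j := by omega
    simp [Finsupp.smul_single, Finsupp.single_apply, this]

lemma Lgen_coeff_top (c : ℕ → ℂ) (hc0 : c 0 = 0) (x : ℕ →₀ ℂ) (m : ℕ)
    (hx : ∀ i ∈ x.support, i ≤ m + 1) : Lgen c x m = c (m + 1) * x (m + 1) := by
  conv_lhs => rw [← Finsupp.erase_add_single (m + 1) x]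
  rw [map_add, Finsupp.add_apply, Lgen_single]
  have h1 : Lgen c (x.erase (m + 1)) m = 0 := by
    apply Lgen_apply_of_le c hc0 _ m _ m le_rfl
    intro i hi
    have h2 := Finsupp.support_erase (a := m+1) (f := x) ▸ hi
    have := Finset.mem_erase.mp h2
    have := hx i this.2
    omega
  rw [h1, zero_add]
  simp

lemma simple_LR (c d : ℕ → ℂ) (hc0 : c 0 = 0) (hc : ∀ i, i ≠ 0 → c i ≠ 0)
    (hd : ∀ i, d i ≠ 0) (p : Submodule ℂ (ℕ →₀ ℂ))
    (hL : ∀ x ∈ p, Lgen c x ∈ p) (hR : ∀ x ∈ p, Rgen d x ∈ p) :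
    p = ⊥ ∨ p = ⊤ := by
  rcases eq_or_ne p ⊥ with h | h
  · exact Or.inl h
  right
  obtain ⟨x, hxp, hx0⟩ := p.ne_bot_iff.mp h
  -- Step A: single 0 1 ∈ p
  have key : ∀ m : ℕ, ∀ y : ℕ →₀ ℂ, y ∈ p → y ≠ 0 → (∀ i ∈ y.support, i ≤ m) →
      Finsupp.single 0 (1 : ℂ) ∈ p := by
    intro m
    induction m with
    | zero =>
      intro y hy hy0 hsupp
      have hy00 : y 0 ≠ 0 := by
        obtain ⟨i, hi⟩ := Finsupp.ne_iff.mp hy0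
        simp only [Finsupp.coe_zero, Pi.zero_apply] at hi
        have hle : i ≤ 0 := hsupp i (Finsupp.mem_support_iff.mpr hi)
        obtain rfl : i = 0 := by omega
        exact hi
      have hyeq : Finsupp.single 0 (1 : ℂ) = (y 0)⁻¹ • y := by
        ext j
        rcases Nat.eq_zero_or_pos j with rfl | hj
        · simp [inv_mul_cancel₀ hy00]
        · have hjzero : y j = 0 := by
            by_contra hh
            have := hsupp j (Finsupp.mem_support_iff.mpr hh)
            omega
          simp [Finsupp.single_apply, hjzero]
          omega
      rw [hyeq]
      exact p.smul_mem _ hy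
    | succ m ih =>
      intro y hy hy0 hsupp
      by_cases hm : y (m + 1) = 0
      · refine ih y hy hy0 fun i hi => ?_
        have := hsupp i hi
        have hne : i ≠ m + 1 := fun hh => (hh ▸ Finsupp.mem_support_iff.mp hi) hm
        omega
      · have hyL : Lgen c y ∈ p := hL y hy
        have hcoef : Lgen c y m = c (m + 1) * y (m + 1) := Lgen_coeff_top c hc0 y m hsupp
        have hne : Lgen c y ≠ 0 := by
          intro hh
          rw [hh] at hcoef
          exact mul_ne_zero (hc _ (Nat.succ_ne_zero m)) hm (by simpa using hcoef.symm)
        refine ih _ hyL hne fun i hi => ?_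
        by_contra hgt
        exact Finsupp.mem_support_iff.mp hi
          (Lgen_apply_of_le c hc0 y (m + 1) hsupp i (by omega))
  have h0 : Finsupp.single 0 (1 : ℂ) ∈ p :=
    key (x.support.sup id) x hxp hx0 fun i hi => Finset.le_sup (f := id) hi
  have hall : ∀ i : ℕ, Finsupp.single i (1 : ℂ) ∈ p := by
    intro i
    induction i with
    | zero => exact h0
    | succ i ih =>
      have := hR _ ih
      rw [Rgen_single, mul_one] at this
      have h2 := p.smul_mem (d i)⁻¹ this
      rwa [Finsupp.smul_single, smul_eq_mul, inv_mul_cancel₀ (hd i)] at h2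
  rw [eq_top_iff]
  intro z hz
  clear hz
  induction z using Finsupp.induction_linear with
  | zero => exact p.zero_mem
  | add u v hu hv => exact p.add_mem hu hv
  | single i a =>
    have := p.smul_mem a (hall i)
    rwa [Finsupp.smul_single, smul_eq_mul, mul_one] at this


lemma prod_cast_descFactorial (n i : ℕ) :
    (∏ j ∈ Finset.range i, ((n : ℂ) - j)) = (n.descFactorial i : ℂ) := by
  induction i with
  | zero => simp
  | succ i ih =>
    rw [Finset.prod_range_succ, ih, Nat.descFactorial_succ, Nat.cast_mul]
    by_cases h : i ≤ n
    · rw [Nat.cast_sub h]; ring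
    · rw [Nat.descFactorial_eq_zero_iff_lt.mpr (by omega)]
      simp
lemma gbinom_nat (n i : ℕ) : gbinom (n : ℂ) i = (n.choose i : ℂ) := by
  rw [gbinom, prod_cast_descFactorial, Nat.descFactorial_eq_factorial_mul_choose,
    Nat.cast_mul, mul_comm, mul_div_assoc, div_self, mul_one]
  exact_mod_cast Nat.factorial_ne_zero i

lemma key_id (n i : ℕ) :
    ((i : ℂ) + 1) * ((n + 2 + i).choose (i + 1) : ℂ)
      = ((n : ℂ) + 2 + i) * ((n + 1 + i).choose i : ℂ) := by
  have h := Nat.add_one_mul_choose_eq (n + 1 + i) i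
  have h2 : n + 1 + i + 1 = n + 2 + i := by omega
  rw [h2] at h
  have h3 : ((n + 2 + i) * (n + 1 + i).choose i : ℕ) = ((n + 2 + i).choose (i + 1) * (i + 1) : ℕ) := h
  have h4 := congrArg (Nat.cast (R := ℂ)) h3
  push_cast at h4
  linear_combination -h4

lemma Eop_eq (lam : ℂ) : Eop lam = Lgen (fun i => if i = 0 then 0 else lam + 1 - i) := by
  apply Finsupp.lhom_ext
  intro i a
  rw [Lgen_single]
  rcases Nat.eq_zero_or_pos i with rfl | h
  · simp [Eop, Finsupp.lsum_single]
  · have : i ≠ 0 := by omega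
    simp [Eop, Finsupp.lsum_single, this, Finsupp.smul_single]

lemma Ed_eq : Ed = Lgen (fun i => (i : ℂ)) := rfl
lemma Fop_eq : Fop = Rgen (fun i => (i : ℂ) + 1) := rfl
lemma Fd_eq (lam : ℂ) : Fd lam = Rgen (fun i => lam - i) := rfl
lemma Hop_eq (lam : ℂ) : Hop lam = diagMap (fun i => lam - 2 * i) := rfl
lemma phiMap_eq (lam : ℂ) : phiMap lam = diagMap (gbinom lam) := rfl

noncomputable def acoef (n i : ℕ) : ℂ := ((n + 1 + i).choose i : ℂ)
noncomputable def bcoef (n i : ℕ) : ℂ := if i ≤ n then 0 else ((i.choose (i - n - 1)) : ℂ)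

lemma acoef_ne (n i : ℕ) : acoef n i ≠ 0 := by
  simp only [acoef, Ne, Nat.cast_eq_zero]
  exact Nat.ne_of_gt (Nat.choose_pos (by omega))

noncomputable def Tmap (n : ℕ) : (ℕ →₀ ℂ) →ₗ[ℂ] (ℕ →₀ ℂ) :=
  Finsupp.lsum ℂ fun i => acoef n i • Finsupp.lsingle (i + n + 1)

noncomputable def Qmap (n : ℕ) : (ℕ →₀ ℂ) →ₗ[ℂ] (ℕ →₀ ℂ) :=
  Finsupp.lsum ℂ fun i => bcoef n i • Finsupp.lsingle (i - n - 1)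

lemma Tmap_single (n i : ℕ) (a : ℂ) :
    Tmap n (Finsupp.single i a) = Finsupp.single (i + n + 1) (acoef n i * a) := by
  simp [Tmap, Finsupp.lsum_single, Finsupp.smul_single]

lemma Qmap_single (n i : ℕ) (a : ℂ) :
    Qmap n (Finsupp.single i a) = Finsupp.single (i - n - 1) (bcoef n i * a) := by
  simp [Qmap, Finsupp.lsum_single, Finsupp.smul_single]

lemma Tmap_apply_hi (n : ℕ) (x : ℕ →₀ ℂ) (j : ℕ) :
    Tmap n x (j + n + 1) = acoef n j * x j := by
  induction x using Finsupp.induction_linear with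
  | zero => simp
  | add u v hu hv => simp [hu, hv, mul_add]
  | single i a =>
    rw [Tmap_single]
    rcases eq_or_ne i j with rfl | h
    · simp
    · have h2 : i + n + 1 ≠ j + n + 1 := by omega
      simp [Finsupp.single_apply, h, h2]

lemma Tmap_apply_lo (n : ℕ) (x : ℕ →₀ ℂ) (j : ℕ) (hj : j ≤ n) :
    Tmap n x j = 0 := by
  induction x using Finsupp.induction_linear with
  | zero => simp
  | add u v hu hv => simp [hu, hv]
  | single i a =>
    rw [Tmap_single]
    have : i + n + 1 ≠ j := by omega
    simp [Finsupp.single_apply, this]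

lemma Qmap_apply (n : ℕ) (x : ℕ →₀ ℂ) (j : ℕ) :
    Qmap n x j = bcoef n (j + n + 1) * x (j + n + 1) := by
  induction x using Finsupp.induction_linear with
  | zero => simp
  | add u v hu hv => simp [hu, hv, mul_add]
  | single i a =>
    rw [Qmap_single]
    rcases eq_or_ne i (j + n + 1) with rfl | h
    · have : j + n + 1 - n - 1 = j := by omega
      simp [this]
    · rcases eq_or_ne (i - n - 1) j with hij | hij
      · have hin : i ≤ n := by omega
        simp [Finsupp.single_apply, hij, bcoef, hin, Finsupp.single_apply, h]
      · simp [Finsupp.single_apply, hij, h]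

lemma TE (n : ℕ) : Tmap n ∘ₗ Eop (-(n : ℂ) - 2) = Eop (n : ℂ) ∘ₗ Tmap n := by
  rw [Eop_eq, Eop_eq]
  apply Finsupp.lhom_ext
  intro i a
  simp only [LinearMap.comp_apply, Lgen_single, Tmap_single]
  cases i with
  | zero =>
    have h0 : (0:ℕ) + n + 1 ≠ 0 := by omega
    rw [if_neg h0]
    have hz : (n : ℂ) + 1 - ((0 + n + 1 : ℕ) : ℂ) = 0 := by push_cast; ring
    rw [hz, zero_mul, Finsupp.single_zero]
    simp
  | succ k =>
    have h1 : k + 1 ≠ 0 := by omega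
    have h2 : k + 1 + n + 1 ≠ 0 := by omega
    rw [if_neg h1, if_neg h2]
    have h3 : k + 1 - 1 = k := by omega
    have h4 : k + 1 + n + 1 - 1 = k + n + 1 := by omega
    rw [h3, h4]
    congr 1
    have h5 : n + 1 + (k + 1) = n + 2 + k := by omega
    simp only [acoef, h5]
    push_cast
    linear_combination a * key_id n k

lemma TF (n : ℕ) : Tmap n ∘ₗ Fop = Fop ∘ₗ Tmap n := by
  rw [Fop_eq]
  apply Finsupp.lhom_ext
  intro i a
  simp only [LinearMap.comp_apply, Rgen_single, Tmap_single]
  have h4 : i + 1 + n + 1 = i + n + 1 + 1 := by omega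
  rw [h4]
  congr 1
  have h5 : n + 1 + (i + 1) = n + 2 + i := by omega
  simp only [acoef, h5]
  push_cast
  linear_combination a * key_id n i

lemma TH (n : ℕ) : Tmap n ∘ₗ Hop (-(n : ℂ) - 2) = Hop (n : ℂ) ∘ₗ Tmap n := by
  rw [Hop_eq, Hop_eq]
  apply Finsupp.lhom_ext
  intro i a
  simp only [LinearMap.comp_apply, diagMap_single, Tmap_single]
  congr 1
  push_cast
  ring

lemma QE (n : ℕ) : Qmap n ∘ₗ Ed = Ed ∘ₗ Qmap n := by
  rw [Ed_eq]
  apply Finsupp.lhom_ext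
  intro i a
  simp only [LinearMap.comp_apply, Lgen_single, Qmap_single]
  by_cases h : i ≤ n + 1
  · have hb : bcoef n (i - 1) = 0 := by simp [bcoef, Nat.sub_le_iff_le_add.mpr (by omega : i ≤ n + 1)]
    have hz : ((i - n - 1 : ℕ) : ℂ) = 0 := by rw [(by omega : i - n - 1 = 0)]; simp
    rw [hb, hz]
    simp
  · obtain ⟨k, rfl⟩ : ∃ k, i = n + 2 + k := ⟨i - n - 2, by omega⟩
    have e1 : n + 2 + k - 1 = n + 1 + k := by omega
    have e2 : n + 1 + k - n - 1 = k := by omega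
    have e3 : n + 2 + k - n - 1 = k + 1 := by omega
    have e4 : k + 1 - 1 = k := by omega
    rw [e1, e2, e3, e4]
    have hb1 : bcoef n (n + 1 + k) = ((n + 1 + k).choose k : ℂ) := by
      rw [bcoef, if_neg (by omega), (by omega : n + 1 + k - n - 1 = k)]
    have hb2 : bcoef n (n + 2 + k) = ((n + 2 + k).choose (k + 1) : ℂ) := by
      rw [bcoef, if_neg (by omega), (by omega : n + 2 + k - n - 1 = k + 1)]
    rw [hb1, hb2]
    congr 1
    have hcast : ((n + 2 + k : ℕ) : ℂ) = (n : ℂ) + 2 + k := by push_cast; ring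
    rw [hcast]
    push_cast
    linear_combination (-a) * key_id n k

lemma QF (n : ℕ) : Qmap n ∘ₗ Fd (n : ℂ) = Fd (-(n : ℂ) - 2) ∘ₗ Qmap n := by
  rw [Fd_eq, Fd_eq]
  apply Finsupp.lhom_ext
  intro i a
  simp only [LinearMap.comp_apply, Rgen_single, Qmap_single]
  by_cases h : i ≤ n - 1 ∧ n ≠ 0
  · have hb1 : bcoef n (i + 1) = 0 := by simp [bcoef, (by omega : i + 1 ≤ n)]
    have hb2 : bcoef n i = 0 := by simp [bcoef, (by omega : i ≤ n)]
    rw [hb1, hb2]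
    simp
  · by_cases h2 : i = n
    · have hb2 : bcoef n i = 0 := by simp [bcoef, le_of_eq h2]
      have hz : (n : ℂ) - (i : ℂ) = 0 := by rw [h2]; ring
      rw [hb2, hz]
      simp
    · -- i ≥ n + 1
      have hge : n + 1 ≤ i := by omega
      obtain ⟨k, rfl⟩ : ∃ k, i = n + 1 + k := ⟨i - n - 1, by omega⟩
      have e1 : n + 1 + k + 1 - n - 1 = k + 1 := by omega
      have e2 : n + 1 + k - n - 1 = k := by omega
      rw [e1, e2]
      have hb1 : bcoef n (n + 1 + k + 1) = ((n + 2 + k).choose (k + 1) : ℂ) := by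
        rw [bcoef, if_neg (by omega), (by omega : n + 1 + k + 1 - n - 1 = k + 1),
          (by omega : n + 1 + k + 1 = n + 2 + k)]
      have hb2 : bcoef n (n + 1 + k) = ((n + 1 + k).choose k : ℂ) := by
        rw [bcoef, if_neg (by omega), (by omega : n + 1 + k - n - 1 = k)]
      rw [hb1, hb2]
      congr 1
      push_cast
      linear_combination (-a) * key_id n k

lemma QH (n : ℕ) : Qmap n ∘ₗ Hop (n : ℂ) = Hop (-(n : ℂ) - 2) ∘ₗ Qmap n := by
  rw [Hop_eq, Hop_eq]
  apply Finsupp.lhom_ext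
  intro i a
  simp only [LinearMap.comp_apply, diagMap_single, Qmap_single]
  by_cases h : i ≤ n
  · have hb : bcoef n i = 0 := by simp [bcoef, h]
    rw [hb]
    simp
  · obtain ⟨k, rfl⟩ : ∃ k, i = n + 1 + k := ⟨i - n - 1, by omega⟩
    have e2 : n + 1 + k - n - 1 = k := by omega
    rw [e2]
    congr 1
    push_cast
    ring

noncomputable def scoef (n i : ℕ) : ℂ := (-1) ^ i * ((n + 1 + i).choose i : ℂ)

lemma scoef_ne (n i : ℕ) : scoef n i ≠ 0 :=
  mul_ne_zero (pow_ne_zero _ (by norm_num)) (by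
    simp only [Ne, Nat.cast_eq_zero]
    exact Nat.ne_of_gt (Nat.choose_pos (by omega)))

lemma SE (n : ℕ) : diagMap (scoef n) ∘ₗ Eop (-(n : ℂ) - 2) = Ed ∘ₗ diagMap (scoef n) := by
  rw [Eop_eq, Ed_eq]
  apply Finsupp.lhom_ext
  intro i a
  simp only [LinearMap.comp_apply, Lgen_single, diagMap_single]
  cases i with
  | zero => simp
  | succ k =>
    rw [if_neg (Nat.succ_ne_zero k), (by omega : k + 1 - 1 = k)]
    congr 1
    simp only [scoef, (by omega : n + 1 + (k + 1) = n + 2 + k), pow_succ]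
    push_cast
    linear_combination (a * (-1) ^ k) * key_id n k

lemma SF (n : ℕ) : diagMap (scoef n) ∘ₗ Fop = Fd (-(n : ℂ) - 2) ∘ₗ diagMap (scoef n) := by
  rw [Fop_eq, Fd_eq]
  apply Finsupp.lhom_ext
  intro i a
  simp only [LinearMap.comp_apply, Rgen_single, diagMap_single]
  congr 1
  simp only [scoef, (by omega : n + 1 + (i + 1) = n + 2 + i), pow_succ]
  linear_combination (-a * (-1) ^ i) * key_id n i

lemma SH (n : ℕ) : diagMap (scoef n) ∘ₗ Hop (-(n : ℂ) - 2) = Hop (-(n : ℂ) - 2) ∘ₗ diagMap (scoef n) := by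
  rw [Hop_eq]
  apply Finsupp.lhom_ext
  intro i a
  simp only [LinearMap.comp_apply, diagMap_single]
  congr 1
  ring

noncomputable def diagEquiv (g : ℕ → ℂ) (hg : ∀ i, g i ≠ 0) : (ℕ →₀ ℂ) ≃ₗ[ℂ] (ℕ →₀ ℂ) :=
  LinearEquiv.ofLinear (diagMap g) (diagMap fun i => (g i)⁻¹)
    (by
      apply Finsupp.lhom_ext
      intro i a
      rw [LinearMap.comp_apply, diagMap_single, diagMap_single, LinearMap.id_apply,
        ← mul_assoc, mul_inv_cancel₀ (hg i), one_mul])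
    (by
      apply Finsupp.lhom_ext
      intro i a
      rw [LinearMap.comp_apply, diagMap_single, diagMap_single, LinearMap.id_apply,
        ← mul_assoc, inv_mul_cancel₀ (hg i), one_mul])

lemma diagEquiv_apply (g : ℕ → ℂ) (hg : ∀ i, g i ≠ 0) (x : ℕ →₀ ℂ) :
    diagEquiv g hg x = diagMap g x := rfl

lemma bcoef_hi (n j : ℕ) : bcoef n (j + n + 1) = ((j + n + 1).choose j : ℂ) := by
  rw [bcoef, if_neg (by omega), (by omega : j + n + 1 - n - 1 = j)]

lemma bcoef_hi_ne (n j : ℕ) : bcoef n (j + n + 1) ≠ 0 := by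
  rw [bcoef_hi]
  simp only [Ne, Nat.cast_eq_zero]
  exact Nat.ne_of_gt (Nat.choose_pos (by omega))

lemma gbinom_ne (n j : ℕ) (hj : j ≤ n) : gbinom (n : ℂ) j ≠ 0 := by
  rw [gbinom_nat]
  simp only [Ne, Nat.cast_eq_zero]
  exact Nat.ne_of_gt (Nat.choose_pos hj)

lemma gbinom_zero (n j : ℕ) (hj : n < j) : gbinom (n : ℂ) j = 0 := by
  rw [gbinom_nat, Nat.choose_eq_zero_of_lt hj, Nat.cast_zero]

noncomputable def Umap (n : ℕ) : (ℕ →₀ ℂ) →ₗ[ℂ] (ℕ →₀ ℂ) :=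
  Finsupp.lsum ℂ fun j => (bcoef n (j + n + 1))⁻¹ • Finsupp.lsingle (j + n + 1)

lemma QU (n : ℕ) : Qmap n ∘ₗ Umap n = LinearMap.id := by
  apply Finsupp.lhom_ext
  intro j a
  rw [LinearMap.comp_apply, LinearMap.id_apply]
  have h1 : Umap n (Finsupp.single j a) = Finsupp.single (j + n + 1) ((bcoef n (j + n + 1))⁻¹ * a) := by
    simp [Umap, Finsupp.lsum_single, Finsupp.smul_single]
  rw [h1, Qmap_single, (by omega : j + n + 1 - n - 1 = j), ← mul_assoc,
    mul_inv_cancel₀ (bcoef_hi_ne n j), one_mul]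

noncomputable def Vmap (n : ℕ) : (ℕ →₀ ℂ) →ₗ[ℂ] (ℕ →₀ ℂ) :=
  Finsupp.lsum ℂ fun i =>
    (if i ≤ n then 0 else (acoef n (i - n - 1))⁻¹) • Finsupp.lsingle (i - n - 1)

lemma TV (n : ℕ) : Tmap n ∘ₗ Vmap n = diagMap fun i => if i ≤ n then 0 else 1 := by
  apply Finsupp.lhom_ext
  intro i a
  have h1 : Vmap n (Finsupp.single i a)
      = Finsupp.single (i - n - 1) ((if i ≤ n then 0 else (acoef n (i - n - 1))⁻¹) * a) := by
    rw [Vmap, Finsupp.lsum_single, LinearMap.smul_apply, Finsupp.lsingle_apply,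
      Finsupp.smul_single']
  rw [LinearMap.comp_apply, h1, diagMap_single, Tmap_single]
  by_cases h : i ≤ n
  · rw [if_pos h, if_pos h]
    simp
  · rw [if_neg h, if_neg h, (by omega : i - n - 1 + n + 1 = i), ← mul_assoc,
      mul_inv_cancel₀ (acoef_ne n (i - n - 1))]

lemma Tinj (n : ℕ) : Function.Injective (Tmap n) := by
  intro x y hxy
  ext j
  have h := congrArg (fun z : ℕ →₀ ℂ => z (j + n + 1)) hxy
  simp only [Tmap_apply_hi] at h
  exact mul_left_cancel₀ (acoef_ne n j) h

lemma Qsurj (n : ℕ) : Function.Surjective (Qmap n) := by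
  intro x
  exact ⟨Umap n x, by rw [← LinearMap.comp_apply, QU, LinearMap.id_apply]⟩

lemma rangeT (n : ℕ) : LinearMap.range (Tmap n) = LinearMap.ker (phiMap (n : ℂ)) := by
  apply le_antisymm
  · rintro _ ⟨y, rfl⟩
    rw [LinearMap.mem_ker, phiMap_eq]
    ext j
    rw [diagMap_apply]
    simp only [Finsupp.coe_zero, Pi.zero_apply]
    by_cases hj : j ≤ n
    · rw [Tmap_apply_lo n y j hj, mul_zero]
    · obtain ⟨k, rfl⟩ : ∃ k, j = k + n + 1 := ⟨j - n - 1, by omega⟩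
      rw [gbinom_zero n _ (by omega), zero_mul]
  · intro x hx
    rw [LinearMap.mem_ker, phiMap_eq] at hx
    have hxj : ∀ j, j ≤ n → x j = 0 := by
      intro j hj
      have h := congrArg (fun z : ℕ →₀ ℂ => z j) hx
      simp only [diagMap_apply, Finsupp.coe_zero, Pi.zero_apply] at h
      exact (mul_eq_zero.mp h).resolve_left (gbinom_ne n j hj)
    refine ⟨Vmap n x, ?_⟩
    rw [← LinearMap.comp_apply, TV]
    ext j
    rw [diagMap_apply]
    by_cases hj : j ≤ n
    · rw [if_pos hj, zero_mul, hxj j hj]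
    · rw [if_neg hj, one_mul]

lemma rangePhi (n : ℕ) : LinearMap.range (phiMap (n : ℂ)) = LinearMap.ker (Qmap n) := by
  apply le_antisymm
  · rintro _ ⟨y, rfl⟩
    rw [LinearMap.mem_ker]
    ext j
    rw [Qmap_apply, phiMap_eq, diagMap_apply, gbinom_zero n _ (by omega), zero_mul, mul_zero]
    simp
  · intro x hx
    rw [LinearMap.mem_ker] at hx
    have hxj : ∀ j, x (j + n + 1) = 0 := by
      intro j
      have h := congrArg (fun z : ℕ →₀ ℂ => z j) hx
      simp only [Qmap_apply, Finsupp.coe_zero, Pi.zero_apply] at h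
      exact (mul_eq_zero.mp h).resolve_left (bcoef_hi_ne n j)
    refine ⟨diagMap (fun i => if i ≤ n then (gbinom (n : ℂ) i)⁻¹ else 0) x, ?_⟩
    rw [phiMap_eq]
    ext j
    rw [diagMap_apply, diagMap_apply]
    by_cases hj : j ≤ n
    · rw [if_pos hj, ← mul_assoc, mul_inv_cancel₀ (gbinom_ne n j hj), one_mul]
    · rw [if_neg hj, zero_mul, mul_zero]
      obtain ⟨k, rfl⟩ : ∃ k, j = k + n + 1 := ⟨j - n - 1, by omega⟩
      exact (hxj k).symm

lemma castE_ne (n i : ℕ) (_hi : i ≠ 0) : -(n : ℂ) - 2 + 1 - (i : ℂ) ≠ 0 := by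
  intro h
  have h2 : ((n + 1 + i : ℕ) : ℂ) = 0 := by push_cast; linear_combination -h
  rw [Nat.cast_eq_zero] at h2
  omega

lemma castF_ne (n i : ℕ) : -(n : ℂ) - 2 - (i : ℂ) ≠ 0 := by
  intro h
  have h2 : ((n + 2 + i : ℕ) : ℂ) = 0 := by push_cast; linear_combination -h
  rw [Nat.cast_eq_zero] at h2
  omega

/-- For λ = n ∈ ℕ there is a four-term exact sequence of sl₂-modules
0 → M(-n-2) → M(n) → DM(n) → DM(-n-2) → 0 with middle map φ_n : v_i ↦ C(n,i)v_i*;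
moreover DM(-n-2) ≅ M(-n-2) and both are simple. -/
theorem four_term_exact_sequence (n : ℕ) :
    (∃ T : (ℕ →₀ ℂ) →ₗ[ℂ] (ℕ →₀ ℂ), ∃ Q : (ℕ →₀ ℂ) →ₗ[ℂ] (ℕ →₀ ℂ),
      -- T : M(-n-2) → M(n) is an injective sl₂-homomorphism
      Function.Injective T ∧
      T ∘ₗ Eop (-(n : ℂ) - 2) = Eop (n : ℂ) ∘ₗ T ∧
      T ∘ₗ Fop = Fop ∘ₗ T ∧
      T ∘ₗ Hop (-(n : ℂ) - 2) = Hop (n : ℂ) ∘ₗ T ∧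
      -- Q : DM(n) → DM(-n-2) is a surjective sl₂-homomorphism
      Function.Surjective Q ∧
      Q ∘ₗ Ed = Ed ∘ₗ Q ∧
      Q ∘ₗ Fd (n : ℂ) = Fd (-(n : ℂ) - 2) ∘ₗ Q ∧
      Q ∘ₗ Hop (n : ℂ) = Hop (-(n : ℂ) - 2) ∘ₗ Q ∧
      -- exactness at M(n) and at DM(n)
      LinearMap.range T = LinearMap.ker (phiMap (n : ℂ)) ∧
      LinearMap.range (phiMap (n : ℂ)) = LinearMap.ker Q) ∧
    -- DM(-n-2) ≅ M(-n-2)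
    (∃ S : (ℕ →₀ ℂ) ≃ₗ[ℂ] (ℕ →₀ ℂ),
      ∀ x : ℕ →₀ ℂ, S (Eop (-(n : ℂ) - 2) x) = Ed (S x) ∧
        S (Fop x) = Fd (-(n : ℂ) - 2) (S x) ∧
        S (Hop (-(n : ℂ) - 2) x) = Hop (-(n : ℂ) - 2) (S x)) ∧
    -- M(-n-2) is simple
    (∀ p : Submodule ℂ (ℕ →₀ ℂ),
      (∀ x ∈ p, Eop (-(n : ℂ) - 2) x ∈ p ∧ Fop x ∈ p ∧ Hop (-(n : ℂ) - 2) x ∈ p) →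
      p = ⊥ ∨ p = ⊤) ∧
    -- DM(-n-2) is simple
    (∀ p : Submodule ℂ (ℕ →₀ ℂ),
      (∀ x ∈ p, Ed x ∈ p ∧ Fd (-(n : ℂ) - 2) x ∈ p ∧ Hop (-(n : ℂ) - 2) x ∈ p) →
      p = ⊥ ∨ p = ⊤) := by
  refine ⟨⟨Tmap n, Qmap n, Tinj n, TE n, TF n, TH n, Qsurj n, QE n, QF n, QH n,
    rangeT n, rangePhi n⟩, ⟨diagEquiv (scoef n) (scoef_ne n), ?_⟩, ?_, ?_⟩
  · intro x
    exact ⟨LinearMap.congr_fun (SE n) x, LinearMap.congr_fun (SF n) x,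
      LinearMap.congr_fun (SH n) x⟩
  · intro p hp
    refine simple_LR (fun i => if i = 0 then 0 else -(n : ℂ) - 2 + 1 - i)
      (fun i => (i : ℂ) + 1) (if_pos rfl) ?_ ?_ p ?_ ?_
    · intro i hi
      simp only [if_neg hi]
      exact castE_ne n i hi
    · intro i
      exact Nat.cast_add_one_ne_zero i
    · intro x hx
      have h := (hp x hx).1
      rwa [Eop_eq] at h
    · intro x hx
      have h := (hp x hx).2.1
      rwa [Fop_eq] at h
  · intro p hp
    refine simple_LR (fun i => (i : ℂ)) (fun i => -(n : ℂ) - 2 - i) Nat.cast_zero ?_ ?_ p ?_ ?_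
    · intro i hi
      exact Nat.cast_ne_zero.mpr hi
    · intro i
      exact castF_ne n i
    · intro x hx
      have h := (hp x hx).1
      rwa [Ed_eq] at h
    · intro x hx
      have h := (hp x hx).2.1
      rwa [Fd_eq] at h
end
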